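/- For stable configuration structures without equidepth auto-concurrency, reverse bisimulation equivalence coincides with hereditary history-preserving bisimulation equivalence. -/

import Mathlib

universe u v

/-- A configuration structure over event type `E` and label alphabet `L`:
a family of finite sets of events (configurations) with a labelling. -/
structure CS (E : Type u) (L : Type v) where
  C : Set (Set E)
  finite : ∀ X ∈ C, X.Finite
  label : E → L

namespace CS

variable {E E₁ E₂ : Type u} {L : Type v}

/-- Stability: rooted, connected, closed under bounded unions and intersections. -/
def IsStable (𝒞 : CS E L) : Prop :=
  ∅ ∈ 𝒞.C ∧
  (∀ X ∈ 𝒞.C, X ≠ ∅ → ∃ e ∈ X, X \ {e} ∈ 𝒞.C) ∧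
  (∀ X ∈ 𝒞.C, ∀ Y ∈ 𝒞.C, ∀ Z ∈ 𝒞.C, X ∪ Y ⊆ Z → X ∪ Y ∈ 𝒞.C) ∧
  (∀ X ∈ 𝒞.C, ∀ Y ∈ 𝒞.C, ∀ Z ∈ 𝒞.C, X ∪ Y ⊆ Z → X ∩ Y ∈ 𝒞.C)

/-- Causality: `d ≤_X e` iff every sub-configuration of `X` containing `e` contains `d`. -/
def le (𝒞 : CS E L) (X : Set E) (d e : E) : Prop :=
  ∀ Y ∈ 𝒞.C, Y ⊆ X → e ∈ Y → d ∈ Y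

/-- Strict causality `d <_X e`. -/
def lt (𝒞 : CS E L) (X : Set E) (d e : E) : Prop :=
  le 𝒞 X d e ∧ d ≠ e

/-- Concurrency within a configuration. -/
def co (𝒞 : CS E L) (X : Set E) (d e : E) : Prop :=
  ¬ lt 𝒞 X d e ∧ ¬ lt 𝒞 X e d

/-- The set of minimal events of a configuration. -/
def minE (𝒞 : CS E L) (X : Set E) : Set E :=
  {e | e ∈ X ∧ ∀ d ∈ X, ¬ lt 𝒞 X d e}

/-- Depth of an event in a configuration: the length of the longest
causal chain (w.r.t. `<_X`) in `X` up to and including `e`. -/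
noncomputable def depth (𝒞 : CS E L) (X : Set E) (e : E) : ℕ :=
  sSup {n | ∃ l : List E, l.length = n ∧ l.Chain' (lt 𝒞 X) ∧
    (∀ x ∈ l, x ∈ X) ∧ l.getLast? = some e}

/-- Multiset of labels of a (finite) set of events. -/
noncomputable def labelMS (𝒞 : CS E L) (S : Set E) : Multiset L := by
  classical exact if h : S.Finite then h.toFinset.val.map 𝒞.label else 0

/-- Single-event forward transition `X —a→ X'`. -/
def FTrans (𝒞 : CS E L) (a : L) (X X' : Set E) : Prop :=
  X ∈ 𝒞.C ∧ X' ∈ 𝒞.C ∧ X ⊆ X' ∧ ∃ e, X' \ X = {e} ∧ 𝒞.label e = a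

/-- Single-event reverse transition `X ⇝a X'`. -/
def RTrans (𝒞 : CS E L) (a : L) (X X' : Set E) : Prop :=
  FTrans 𝒞 a X' X

/-- Step transition `X —A→ X'`: the added events are pairwise concurrent
in `X'` and carry the label multiset `A`. -/
def Step (𝒞 : CS E L) (A : Multiset L) (X X' : Set E) : Prop :=
  X ∈ 𝒞.C ∧ X' ∈ 𝒞.C ∧ X ⊆ X' ∧ ∃ F : Finset E, ↑F = X' \ X ∧
    (∀ d ∈ F, ∀ e ∈ F, co 𝒞 X' d e) ∧ F.val.map 𝒞.label = A

/-- Reverse step transition `X ⇝A X'`. -/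
def RStep (𝒞 : CS E L) (A : Multiset L) (X X' : Set E) : Prop :=
  Step 𝒞 A X' X

/-- Equidepth step: all added events have the same depth in `X'`. -/
def EqStep (𝒞 : CS E L) (A : Multiset L) (X X' : Set E) : Prop :=
  Step 𝒞 A X X' ∧ ∀ d ∈ X' \ X, ∀ e ∈ X' \ X, depth 𝒞 X' d = depth 𝒞 X' e

/-- Reverse equidepth step `X ⇝A= X'`. -/
def REqStep (𝒞 : CS E L) (A : Multiset L) (X X' : Set E) : Prop :=
  EqStep 𝒞 A X' X

/-- Single-event forward transition with depth: the new event has label `a`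
and depth `k` in `X'`. -/
def FTransD (𝒞 : CS E L) (a : L) (k : ℕ) (X X' : Set E) : Prop :=
  X ∈ 𝒞.C ∧ X' ∈ 𝒞.C ∧ X ⊆ X' ∧
    ∃ e, X' \ X = {e} ∧ 𝒞.label e = a ∧ depth 𝒞 X' e = k

/-- Single-event reverse transition with depth. -/
def RTransD (𝒞 : CS E L) (a : L) (k : ℕ) (X X' : Set E) : Prop :=
  FTransD 𝒞 a k X' X

/-- A multiset of labels is homogeneous if all its elements are equal. -/
def Hom (A : Multiset L) : Prop := ∀ a ∈ A, ∀ b ∈ A, a = b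

/-- `R` is a relation between configurations of `𝒞` and `𝒟`, containing `(∅, ∅)`. -/
def Dom (𝒞 : CS E₁ L) (𝒟 : CS E₂ L) (R : Set E₁ → Set E₂ → Prop) : Prop :=
  R ∅ ∅ ∧ ∀ X Y, R X Y → X ∈ 𝒞.C ∧ Y ∈ 𝒟.C

/-- Interleaving bisimulation. -/
def IsIB (𝒞 : CS E₁ L) (𝒟 : CS E₂ L) (R : Set E₁ → Set E₂ → Prop) : Prop :=
  Dom 𝒞 𝒟 R ∧ ∀ X Y, R X Y →
    (∀ a X', FTrans 𝒞 a X X' → ∃ Y', FTrans 𝒟 a Y Y' ∧ R X' Y') ∧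
    (∀ a Y', FTrans 𝒟 a Y Y' → ∃ X', FTrans 𝒞 a X X' ∧ R X' Y')

/-- Reverse bisimulation: an IB also matching reverse single-event transitions. -/
def IsRB (𝒞 : CS E₁ L) (𝒟 : CS E₂ L) (R : Set E₁ → Set E₂ → Prop) : Prop :=
  IsIB 𝒞 𝒟 R ∧ ∀ X Y, R X Y →
    (∀ a X', RTrans 𝒞 a X X' → ∃ Y', RTrans 𝒟 a Y Y' ∧ R X' Y') ∧
    (∀ a Y', RTrans 𝒟 a Y Y' → ∃ X', RTrans 𝒞 a X X' ∧ R X' Y')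

/-- Step bisimulation. -/
def IsSB (𝒞 : CS E₁ L) (𝒟 : CS E₂ L) (R : Set E₁ → Set E₂ → Prop) : Prop :=
  Dom 𝒞 𝒟 R ∧ ∀ X Y, R X Y →
    (∀ A X', Step 𝒞 A X X' → ∃ Y', Step 𝒟 A Y Y' ∧ R X' Y') ∧
    (∀ A Y', Step 𝒟 A Y Y' → ∃ X', Step 𝒞 A X X' ∧ R X' Y')

/-- Reverse step bisimulation: an SB also matching reverse steps. -/
def IsRSB (𝒞 : CS E₁ L) (𝒟 : CS E₂ L) (R : Set E₁ → Set E₂ → Prop) : Prop :=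
  IsSB 𝒞 𝒟 R ∧ ∀ X Y, R X Y →
    (∀ A X', RStep 𝒞 A X X' → ∃ Y', RStep 𝒟 A Y Y' ∧ R X' Y') ∧
    (∀ A Y', RStep 𝒟 A Y Y' → ∃ X', RStep 𝒞 A X X' ∧ R X' Y')

/-- Reverse homogeneous step bisimulation: matches forward single-event
transitions and reverse homogeneous steps. -/
def IsRHSB (𝒞 : CS E₁ L) (𝒟 : CS E₂ L) (R : Set E₁ → Set E₂ → Prop) : Prop :=
  Dom 𝒞 𝒟 R ∧ ∀ X Y, R X Y →
    (∀ a X', FTrans 𝒞 a X X' → ∃ Y', FTrans 𝒟 a Y Y' ∧ R X' Y') ∧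
    (∀ a Y', FTrans 𝒟 a Y Y' → ∃ X', FTrans 𝒞 a X X' ∧ R X' Y') ∧
    (∀ A X', Hom A → RStep 𝒞 A X X' → ∃ Y', RStep 𝒟 A Y Y' ∧ R X' Y') ∧
    (∀ A Y', Hom A → RStep 𝒟 A Y Y' → ∃ X', RStep 𝒞 A X X' ∧ R X' Y')

/-- Reverse homogeneous equidepth step bisimulation. -/
def IsRHESB (𝒞 : CS E₁ L) (𝒟 : CS E₂ L) (R : Set E₁ → Set E₂ → Prop) : Prop :=
  Dom 𝒞 𝒟 R ∧ ∀ X Y, R X Y →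
    (∀ a X', FTrans 𝒞 a X X' → ∃ Y', FTrans 𝒟 a Y Y' ∧ R X' Y') ∧
    (∀ a Y', FTrans 𝒟 a Y Y' → ∃ X', FTrans 𝒞 a X X' ∧ R X' Y') ∧
    (∀ A X', Hom A → REqStep 𝒞 A X X' → ∃ Y', REqStep 𝒟 A Y Y' ∧ R X' Y') ∧
    (∀ A Y', Hom A → REqStep 𝒟 A Y Y' → ∃ X', REqStep 𝒞 A X X' ∧ R X' Y')

/-- Depth-respecting bisimulation. -/
def IsDB (𝒞 : CS E₁ L) (𝒟 : CS E₂ L) (R : Set E₁ → Set E₂ → Prop) : Prop :=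
  Dom 𝒞 𝒟 R ∧ ∀ X Y, R X Y →
    (∀ a k X', FTransD 𝒞 a k X X' → ∃ Y', FTransD 𝒟 a k Y Y' ∧ R X' Y') ∧
    (∀ a k Y', FTransD 𝒟 a k Y Y' → ∃ X', FTransD 𝒞 a k X X' ∧ R X' Y')

/-- Reverse depth-respecting bisimulation. -/
def IsRDB (𝒞 : CS E₁ L) (𝒟 : CS E₂ L) (R : Set E₁ → Set E₂ → Prop) : Prop :=
  IsDB 𝒞 𝒟 R ∧ ∀ X Y, R X Y →
    (∀ a k X', RTransD 𝒞 a k X X' → ∃ Y', RTransD 𝒟 a k Y Y' ∧ R X' Y') ∧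
    (∀ a k Y', RTransD 𝒟 a k Y Y' → ∃ X', RTransD 𝒞 a k X X' ∧ R X' Y')

/-- The lifting of a configuration structure w.r.t. a configuration `M`. -/
def lift (𝒞 : CS E L) (M : Set E) : CS E L where
  C := {Z | ∃ X, X ∈ 𝒞.C ∧ M ⊆ X ∧ minE 𝒞 X = minE 𝒞 M ∧ Z = X \ M}
  finite := by
    rintro Z ⟨X, hX, -, -, rfl⟩
    exact (𝒞.finite X hX).subset Set.diff_subset
  label := 𝒞.label

/-- Events of `X` of depth at most `n`. -/
def levelLe (𝒞 : CS E L) (X : Set E) (n : ℕ) : Set E :=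
  {e | e ∈ X ∧ depth 𝒞 X e ≤ n}

/-- Events of `X` of depth exactly `n`. -/
def levelEq (𝒞 : CS E L) (X : Set E) (n : ℕ) : Set E :=
  {e | e ∈ X ∧ depth 𝒞 X e = n}

/-- No equidepth auto-concurrency: distinct concurrent events never share
both label and depth. -/
def NoEqAC (𝒞 : CS E L) : Prop :=
  ∀ X ∈ 𝒞.C, ∀ d ∈ X, ∀ e ∈ X, co 𝒞 X d e → 𝒞.label d = 𝒞.label e →
    depth 𝒞 X d = depth 𝒞 X e → d = e

/-- `f` (a set of pairs) is a label- and order-preserving isomorphism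
between configurations `X` and `Y`. -/
def IsIso (𝒞 : CS E₁ L) (𝒟 : CS E₂ L) (X : Set E₁) (Y : Set E₂)
    (f : Set (E₁ × E₂)) : Prop :=
  (∀ p ∈ f, p.1 ∈ X ∧ p.2 ∈ Y) ∧
  (∀ d ∈ X, ∃! e, (d, e) ∈ f) ∧
  (∀ e ∈ Y, ∃! d, (d, e) ∈ f) ∧
  (∀ p ∈ f, 𝒞.label p.1 = 𝒟.label p.2) ∧
  (∀ p ∈ f, ∀ q ∈ f, (lt 𝒞 X p.1 q.1 ↔ lt 𝒟 Y p.2 q.2))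

/-- Hereditary history-preserving bisimulation. -/
def IsHH (𝒞 : CS E₁ L) (𝒟 : CS E₂ L)
    (R : Set (Set E₁ × Set E₂ × Set (E₁ × E₂))) : Prop :=
  (∅, ∅, ∅) ∈ R ∧
  ∀ X Y f, (X, Y, f) ∈ R →
    X ∈ 𝒞.C ∧ Y ∈ 𝒟.C ∧ IsIso 𝒞 𝒟 X Y f ∧
    (∀ a X', FTrans 𝒞 a X X' → ∃ Y' f', FTrans 𝒟 a Y Y' ∧
      (X', Y', f') ∈ R ∧ {p ∈ f' | p.1 ∈ X} = f) ∧
    (∀ a Y', FTrans 𝒟 a Y Y' → ∃ X' f', FTrans 𝒞 a X X' ∧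
      (X', Y', f') ∈ R ∧ {p ∈ f' | p.1 ∈ X} = f) ∧
    (∀ a X', RTrans 𝒞 a X X' → ∃ Y' f', RTrans 𝒟 a Y Y' ∧
      (X', Y', f') ∈ R ∧ {p ∈ f | p.1 ∈ X'} = f')

end CS

open CS

/-!
The set of (label, depth) pairs of a configuration is invariant under reverse bisimulation, by
induction on the configuration: if `X` has two maximal events, the pair of one survives the
removal of the other and is thereby forced onto the matched event of `Y`; if `X` and `Y` each
have a single maximal event, its depth is one more than the greatest depth left after removing it.
Without equidepth auto-concurrency a (label, depth) pair determines its event, so matching equal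
pairs is a bijection. It preserves causality because the reverse transitions from `Y` down to a
subconfiguration `Z` are matched by reverse transitions from `X` down to some `W` with the same
pairs, and `W` contains exactly the partners of the events of `Z`. Conversely, in an HH
bisimulation a reverse transition of `Y` is matched by removing the partner of the removed event,
which is maximal because the isomorphism preserves causality.
-/

namespace CS

variable {E E₁ E₂ : Type u} {L : Type v}

section Causality

variable {𝒞 : CS E L} {X Y : Set E} {d e : E}

@[elab_as_elim]
theorem induction_by_removal {P : Set E → Prop}
    (step : ∀ X ∈ 𝒞.C, (∀ e ∈ X, X \ {e} ∈ 𝒞.C → P (X \ {e})) → P X) (hX : X ∈ 𝒞.C) :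
    P X := by
  induction hn : X.ncard using Nat.strong_induction_on generalizing X with
  | _ n ih =>
    refine step X hX fun e he heX => ih _ ?_ heX rfl
    exact hn ▸ Set.ncard_sdiff_singleton_lt_of_mem he (𝒞.finite X hX)

theorem rTrans_iff {a : L} {X' : Set E} :
    RTrans 𝒞 a X X' ↔ X ∈ 𝒞.C ∧ ∃ e ∈ X, 𝒞.label e = a ∧ X \ {e} ∈ 𝒞.C ∧ X' = X \ {e} := by
  constructor
  · rintro ⟨hX', hX, hX'X, e, hdiff, rfl⟩
    have he : e ∈ X \ X' := hdiff ▸ rfl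
    have hX'eq : X' = X \ {e} := by rw [← hdiff, Set.sdiff_sdiff_cancel_left hX'X]
    exact ⟨hX, e, he.1, rfl, hX'eq ▸ hX', hX'eq⟩
  · rintro ⟨hX, e, he, rfl, heX, rfl⟩
    exact ⟨heX, hX, Set.sdiff_subset, e,
      Set.sdiff_sdiff_cancel_left (Set.singleton_subset_iff.2 he), rfl⟩

theorem le.refl (𝒞 : CS E L) (X : Set E) (e : E) : le 𝒞 X e e := fun _ _ _ h => h

theorem le.trans {c : E} (hde : le 𝒞 X d e) (hec : le 𝒞 X e c) : le 𝒞 X d c :=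
  fun Y hY hYX hc => hde Y hY hYX (hec Y hY hYX hc)

theorem le.anti (hYX : Y ⊆ X) (hde : le 𝒞 X d e) : le 𝒞 Y d e :=
  fun Z hZ hZY => hde Z hZ (hZY.trans hYX)

theorem not_le_of_diff_singleton_mem (heX : X \ {e} ∈ 𝒞.C) (hd : d ∈ X) (hde : d ≠ e) :
    ¬ le 𝒞 X e d :=
  fun hle => (hle _ heX Set.sdiff_subset ⟨hd, hde⟩).2 rfl

theorem not_lt_of_diff_singleton_mem (heX : X \ {e} ∈ 𝒞.C) (hd : d ∈ X) : ¬ lt 𝒞 X e d :=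
  fun hlt => not_le_of_diff_singleton_mem heX hd hlt.2.symm hlt.1

theorem IsStable.le_antisymm (h : IsStable 𝒞) (hX : X ∈ 𝒞.C) (hd : d ∈ X) (he : e ∈ X)
    (hde : le 𝒞 X d e) (hed : le 𝒞 X e d) : d = e := by
  revert hd he hde hed
  refine induction_by_removal (fun X hX ih hd he hde hed => ?_) hX
  by_contra hne
  obtain ⟨u, hu, huX⟩ := h.2.1 X hX (Set.nonempty_of_mem hd).ne_empty
  have hdu : d ≠ u := by
    rintro rfl
    exact not_le_of_diff_singleton_mem huX he (Ne.symm hne) hde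
  have heu : e ≠ u := by
    rintro rfl
    exact not_le_of_diff_singleton_mem huX hd hne hed
  exact hne (ih u hu huX ⟨hd, hdu⟩ ⟨he, heu⟩ (hde.anti Set.sdiff_subset)
    (hed.anti Set.sdiff_subset))

theorem IsStable.lt_trans (h : IsStable 𝒞) (hX : X ∈ 𝒞.C) {c : E} (hd : d ∈ X) (he : e ∈ X)
    (hde : lt 𝒞 X d e) (hec : lt 𝒞 X e c) : lt 𝒞 X d c :=
  ⟨hde.1.trans hec.1, by rintro rfl; exact hde.2 (h.le_antisymm hX hd he hde.1 hec.1)⟩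

theorem IsStable.le_iff_of_subset (h : IsStable 𝒞) (hX : X ∈ 𝒞.C) (hY : Y ∈ 𝒞.C)
    (hYX : Y ⊆ X) (he : e ∈ Y) : le 𝒞 Y d e ↔ le 𝒞 X d e :=
  ⟨fun hle Z hZ hZX heZ => (hle (Z ∩ Y) (h.2.2.2 Z hZ Y hY X hX (Set.union_subset hZX hYX))
    Set.inter_subset_right ⟨heZ, he⟩).1, le.anti hYX⟩

theorem IsStable.lt_iff_of_subset (h : IsStable 𝒞) (hX : X ∈ 𝒞.C) (hY : Y ∈ 𝒞.C)
    (hYX : Y ⊆ X) (he : e ∈ Y) : lt 𝒞 Y d e ↔ lt 𝒞 X d e :=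
  and_congr_left' (h.le_iff_of_subset hX hY hYX he)

theorem IsStable.biUnion_mem (h : IsStable 𝒞) (hX : X ∈ 𝒞.C) {ι : Type*} {S : Set ι}
    (hS : S.Finite) {Z : ι → Set E} (hZ : ∀ i ∈ S, Z i ∈ 𝒞.C ∧ Z i ⊆ X) :
    (⋃ i ∈ S, Z i) ∈ 𝒞.C := by
  induction S, hS using Set.Finite.induction_on with
  | empty => simpa using h.1
  | @insert i S _ _ ih =>
    have hZi := hZ i (Set.mem_insert i S)
    have hZS := fun j hj => hZ j (Set.mem_insert_of_mem i hj)
    rw [Set.biUnion_insert]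
    exact h.2.2.1 _ hZi.1 _ (ih hZS) X hX
      (Set.union_subset hZi.2 (Set.iUnion₂_subset fun j hj => (hZS j hj).2))

/-- `X \ {e}` is the union of subconfigurations of `X` separating each of its events from `e`. -/
theorem IsStable.diff_singleton_mem (h : IsStable 𝒞) (hX : X ∈ 𝒞.C)
    (hmax : ∀ d ∈ X, ¬ lt 𝒞 X e d) : X \ {e} ∈ 𝒞.C := by
  have hsep : ∀ d ∈ X \ {e}, ∃ Z ∈ 𝒞.C, Z ⊆ X ∧ d ∈ Z ∧ e ∉ Z := by
    intro d hd
    by_contra! hall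
    exact hmax d hd.1 ⟨hall, fun hed => hd.2 hed.symm⟩
  choose! Z hZ hZX hdZ heZ using hsep
  have hunion : X \ {e} = ⋃ d ∈ X \ {e}, Z d := by
    ext x
    simp only [Set.mem_iUnion]
    refine ⟨fun hx => ⟨x, hx, hdZ x hx⟩, ?_⟩
    rintro ⟨d, hd, hx⟩
    exact ⟨hZX d hd hx, fun hxe => heZ d hd (Set.mem_singleton_iff.1 hxe ▸ hx)⟩
  rw [hunion]
  exact h.biUnion_mem hX ((𝒞.finite X hX).subset Set.sdiff_subset)
    fun d hd => ⟨hZ d hd, hZX d hd⟩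

end Causality

section Depth

variable {𝒞 : CS E L} {X Y : Set E} {d e : E}

def chainLengths (𝒞 : CS E L) (X : Set E) (e : E) : Set ℕ :=
  {n | ∃ l : List E, l.length = n ∧ l.IsChain (lt 𝒞 X) ∧ (∀ x ∈ l, x ∈ X) ∧
    l.getLast? = some e}

theorem depth_eq_sSup_chainLengths : depth 𝒞 X e = sSup (chainLengths 𝒞 X e) := rfl

theorem le_of_mem_of_isChain {l : List E} (hl : l.IsChain (lt 𝒞 X)) (hlast : l.getLast? = some e)
    {x : E} (hx : x ∈ l) : le 𝒞 X x e := by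
  have : Trans (le 𝒞 X) (le 𝒞 X) (le 𝒞 X) := ⟨le.trans⟩
  have hp := (hl.imp fun _ _ hab => hab.1).pairwise
  rw [← List.dropLast_append_getLast? (l := l) e (by simp [hlast])] at hp hx
  rcases List.mem_append.1 hx with hx | hx
  · exact (List.pairwise_append.1 hp).2.2 x hx e (List.mem_singleton_self e)
  · exact List.mem_singleton.1 hx ▸ le.refl 𝒞 X x

theorem IsStable.length_le_ncard (h : IsStable 𝒞) (hX : X ∈ 𝒞.C) {l : List E}
    (hl : l.IsChain (lt 𝒞 X)) (hlX : ∀ x ∈ l, x ∈ X) : l.length ≤ X.ncard := by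
  let r : E → E → Prop := fun a b => a ∈ X ∧ b ∈ X ∧ lt 𝒞 X a b
  have : Trans r r r :=
    ⟨fun hab hbc => ⟨hab.1, hbc.2.1, h.lt_trans hX hab.1 hab.2.1 hab.2.2 hbc.2.2⟩⟩
  have hnd : l.Nodup :=
    ((hl.imp_of_mem_imp (S := r) fun a b ha hb hab => ⟨hlX a ha, hlX b hb, hab⟩).pairwise).imp
      fun hab => hab.2.2.2
  classical
  calc l.length = (l.toFinset : Set E).ncard := by
        rw [Set.ncard_coe_finset, List.toFinset_card_of_nodup hnd]
    _ ≤ X.ncard := Set.ncard_le_ncard (fun x hx => hlX x (List.mem_toFinset.1 hx)) (𝒞.finite X hX)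

theorem IsStable.bddAbove_chainLengths (h : IsStable 𝒞) (hX : X ∈ 𝒞.C) (e : E) :
    BddAbove (chainLengths 𝒞 X e) :=
  ⟨X.ncard, by rintro _ ⟨l, rfl, hl, hlX, -⟩; exact h.length_le_ncard hX hl hlX⟩

theorem IsStable.le_depth (h : IsStable 𝒞) (hX : X ∈ 𝒞.C) {n : ℕ}
    (hn : n ∈ chainLengths 𝒞 X e) : n ≤ depth 𝒞 X e :=
  le_csSup (h.bddAbove_chainLengths hX e) hn

theorem singleton_mem_chainLengths (he : e ∈ X) : 1 ∈ chainLengths 𝒞 X e :=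
  ⟨[e], rfl, List.isChain_singleton e, by simpa using he, rfl⟩

theorem IsStable.depth_mem_chainLengths (h : IsStable 𝒞) (hX : X ∈ 𝒞.C) (he : e ∈ X) :
    depth 𝒞 X e ∈ chainLengths 𝒞 X e :=
  Nat.sSup_mem ⟨1, singleton_mem_chainLengths he⟩ (h.bddAbove_chainLengths hX e)

theorem IsStable.depth_lt_depth (h : IsStable 𝒞) (hX : X ∈ 𝒞.C) (hd : d ∈ X) (he : e ∈ X)
    (hde : lt 𝒞 X d e) : depth 𝒞 X d < depth 𝒞 X e := by
  obtain ⟨l, hlen, hl, hlX, hlast⟩ := h.depth_mem_chainLengths hX hd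
  refine hlen ▸ h.le_depth hX ⟨l ++ [e], by simp, ?_, ?_, by simp⟩
  · exact List.isChain_append.2 ⟨hl, List.isChain_singleton e, by simpa [hlast] using hde⟩
  · simpa [or_imp, forall_and, he] using hlX

theorem IsStable.depth_eq_of_subset (h : IsStable 𝒞) (hX : X ∈ 𝒞.C) (hY : Y ∈ 𝒞.C)
    (hYX : Y ⊆ X) (he : e ∈ Y) : depth 𝒞 Y e = depth 𝒞 X e := by
  have hchain : ∀ l : List E, (∀ x ∈ l, x ∈ Y) → (l.IsChain (lt 𝒞 Y) ↔ l.IsChain (lt 𝒞 X)) :=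
    fun l hlY => List.IsChain.iff_of_mem_imp fun _ b _ hb =>
      h.lt_iff_of_subset hX hY hYX (hlY b hb)
  rw [depth_eq_sSup_chainLengths, depth_eq_sSup_chainLengths]
  congr 1
  ext n
  constructor
  · rintro ⟨l, hn, hl, hlY, hlast⟩
    exact ⟨l, hn, (hchain l hlY).1 hl, fun x hx => hYX (hlY x hx), hlast⟩
  · rintro ⟨l, hn, hl, -, hlast⟩
    have hlY : ∀ x ∈ l, x ∈ Y := fun x hx => le_of_mem_of_isChain hl hlast hx Y hY hYX he
    exact ⟨l, hn, (hchain l hlY).2 hl, hlY, hlast⟩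

theorem IsStable.depth_eq_sSup_add_one (h : IsStable 𝒞) (hX : X ∈ 𝒞.C) (he : e ∈ X) :
    depth 𝒞 X e = sSup (depth 𝒞 X '' {d ∈ X | lt 𝒞 X d e}) + 1 := by
  have hbdd : BddAbove (depth 𝒞 X '' {d ∈ X | lt 𝒞 X d e}) :=
    (((𝒞.finite X hX).subset fun _ hd => hd.1).image _).bddAbove
  apply Nat.le_antisymm
  · obtain ⟨l, hlen, hl, hlX, hlast⟩ := h.depth_mem_chainLengths hX he
    rw [← List.dropLast_append_getLast? (l := l) e (by simp [hlast])] at hl hlen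
    rw [List.length_append, List.length_singleton] at hlen
    obtain ⟨hl', -, hlink⟩ := List.isChain_append.1 hl
    cases hd : l.dropLast.getLast? with
    | none => simp only [List.getLast?_eq_none_iff.1 hd, List.length_nil] at hlen; omega
    | some d =>
      have hdX : d ∈ X := hlX d (List.dropLast_subset l (List.mem_of_mem_getLast? hd))
      have hde : lt 𝒞 X d e := hlink d hd e rfl
      have h₁ : l.dropLast.length ≤ depth 𝒞 X d :=
        h.le_depth hX ⟨_, rfl, hl', fun x hx => hlX x (List.dropLast_subset l hx), hd⟩
      have h₂ : depth 𝒞 X d ≤ sSup (depth 𝒞 X '' {d ∈ X | lt 𝒞 X d e}) :=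
        le_csSup hbdd ⟨d, ⟨hdX, hde⟩, rfl⟩
      omega
  · have h₁ : 1 ≤ depth 𝒞 X e := h.le_depth hX (singleton_mem_chainLengths he)
    have h₂ : sSup (depth 𝒞 X '' {d ∈ X | lt 𝒞 X d e}) ≤ depth 𝒞 X e - 1 := by
      refine csSup_le' ?_
      rintro _ ⟨d, ⟨hd, hde⟩, rfl⟩
      have := h.depth_lt_depth hX hd he hde
      omega
    omega

theorem IsStable.exists_removable_above (h : IsStable 𝒞) (hX : X ∈ 𝒞.C) (hd : d ∈ X) :
    ∃ m ∈ X, X \ {m} ∈ 𝒞.C ∧ le 𝒞 X d m := by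
  obtain ⟨m, ⟨hm, hdm⟩, hmax⟩ := Set.exists_max_image {x ∈ X | le 𝒞 X d x} (depth 𝒞 X)
    ((𝒞.finite X hX).subset fun _ hx => hx.1) ⟨d, hd, le.refl 𝒞 X d⟩
  refine ⟨m, hm, h.diff_singleton_mem hX fun y hy hmy => ?_, hdm⟩
  exact (hmax y ⟨hy, hdm.trans hmy.1⟩).not_gt (h.depth_lt_depth hX hm hy hmy)

theorem IsStable.lt_of_unique_removable (h : IsStable 𝒞) (hX : X ∈ 𝒞.C)
    (huniq : ∀ d ∈ X, X \ {d} ∈ 𝒞.C → d = e) (hd : d ∈ X) (hde : d ≠ e) : lt 𝒞 X d e := by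
  obtain ⟨m, hm, hmX, hdm⟩ := h.exists_removable_above hX hd
  exact ⟨huniq m hm hmX ▸ hdm, hde⟩

theorem NoEqAC.eq_of_label_eq_of_depth_eq (hac : NoEqAC 𝒞) (h : IsStable 𝒞) (hX : X ∈ 𝒞.C)
    (hd : d ∈ X) (he : e ∈ X) (hlab : 𝒞.label d = 𝒞.label e)
    (hdep : depth 𝒞 X d = depth 𝒞 X e) : d = e :=
  hac X hX d hd e he ⟨fun hlt => (h.depth_lt_depth hX hd he hlt).ne hdep,
    fun hlt => (h.depth_lt_depth hX he hd hlt).ne' hdep⟩ hlab hdep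

end Depth

section LabelDepths

variable {𝒞 : CS E L} {X Y : Set E} {e : E}

def labelDepths (𝒞 : CS E L) (X : Set E) : Set (L × ℕ) :=
  (fun e => (𝒞.label e, depth 𝒞 X e)) '' X

theorem IsStable.mk_mem_labelDepths (h : IsStable 𝒞) (hX : X ∈ 𝒞.C) (hY : Y ∈ 𝒞.C)
    (hYX : Y ⊆ X) (he : e ∈ Y) : (𝒞.label e, depth 𝒞 X e) ∈ labelDepths 𝒞 Y :=
  ⟨e, he, Prod.ext rfl (h.depth_eq_of_subset hX hY hYX he)⟩

theorem IsStable.labelDepths_mono (h : IsStable 𝒞) (hX : X ∈ 𝒞.C) (hY : Y ∈ 𝒞.C)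
    (hYX : Y ⊆ X) : labelDepths 𝒞 Y ⊆ labelDepths 𝒞 X := by
  rintro _ ⟨e, he, rfl⟩
  exact ⟨e, hYX he, Prod.ext rfl (h.depth_eq_of_subset hX hY hYX he).symm⟩

theorem IsStable.labelDepths_eq_insert (h : IsStable 𝒞) (hX : X ∈ 𝒞.C) (he : e ∈ X)
    (heX : X \ {e} ∈ 𝒞.C) :
    labelDepths 𝒞 X = insert (𝒞.label e, depth 𝒞 X e) (labelDepths 𝒞 (X \ {e})) := by
  refine Set.Subset.antisymm ?_ (Set.insert_subset ⟨e, he, rfl⟩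
    (h.labelDepths_mono hX heX Set.sdiff_subset))
  rintro _ ⟨d, hd, rfl⟩
  by_cases hde : d = e
  · exact hde ▸ Set.mem_insert _ _
  · exact Set.mem_insert_of_mem _ (h.mk_mem_labelDepths hX heX Set.sdiff_subset ⟨hd, hde⟩)

theorem NoEqAC.mk_notMem_labelDepths_diff (hac : NoEqAC 𝒞) (h : IsStable 𝒞) (hX : X ∈ 𝒞.C)
    (he : e ∈ X) (heX : X \ {e} ∈ 𝒞.C) :
    (𝒞.label e, depth 𝒞 X e) ∉ labelDepths 𝒞 (X \ {e}) := by
  rintro ⟨d, hd, hde⟩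
  simp only [h.depth_eq_of_subset hX heX Set.sdiff_subset hd, Prod.mk.injEq] at hde
  exact hd.2 (hac.eq_of_label_eq_of_depth_eq h hX hd.1 he hde.1 hde.2)

theorem IsStable.depth_eq_sSup_labelDepths_add_one (h : IsStable 𝒞) (hX : X ∈ 𝒞.C)
    (he : e ∈ X) (heX : X \ {e} ∈ 𝒞.C) (htop : ∀ d ∈ X, d ≠ e → lt 𝒞 X d e) :
    depth 𝒞 X e = sSup (Prod.snd '' labelDepths 𝒞 (X \ {e})) + 1 := by
  have hbelow : {d ∈ X | lt 𝒞 X d e} = X \ {e} :=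
    Set.ext fun d => ⟨fun hd => ⟨hd.1, hd.2.2⟩, fun hd => ⟨hd.1, htop d hd.1 hd.2⟩⟩
  have hsnd : Prod.snd '' labelDepths 𝒞 (X \ {e}) = depth 𝒞 X '' (X \ {e}) := by
    rw [labelDepths, Set.image_image]
    exact Set.image_congr fun d hd => h.depth_eq_of_subset hX heX Set.sdiff_subset hd
  rw [hsnd, ← hbelow]
  exact h.depth_eq_sSup_add_one hX he

end LabelDepths

section Bisimulation

variable {𝒞 : CS E₁ L} {𝒟 : CS E₂ L} {X : Set E₁} {Y : Set E₂}

/-- The (label, depth) pair of `e₁` survives the removal of `e₂`, hence occurs in `Y`; as it does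
not occur after removing `e₁`, it is the pair of `e₁'`. -/
theorem labelDepths_eq_of_two_removals (h𝒞 : IsStable 𝒞) (h𝒟 : IsStable 𝒟)
    (hac𝒞 : NoEqAC 𝒞) (hX : X ∈ 𝒞.C) (hY : Y ∈ 𝒟.C) {e₁ e₂ : E₁} {e₁' e₂' : E₂}
    (he₁ : e₁ ∈ X) (he₁X : X \ {e₁} ∈ 𝒞.C) (he₂X : X \ {e₂} ∈ 𝒞.C) (hne : e₁ ≠ e₂)
    (he₁' : e₁' ∈ Y) (he₁'Y : Y \ {e₁'} ∈ 𝒟.C) (he₂'Y : Y \ {e₂'} ∈ 𝒟.C)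
    (hS₁ : labelDepths 𝒞 (X \ {e₁}) = labelDepths 𝒟 (Y \ {e₁'}))
    (hS₂ : labelDepths 𝒞 (X \ {e₂}) = labelDepths 𝒟 (Y \ {e₂'})) :
    labelDepths 𝒞 X = labelDepths 𝒟 Y := by
  have hp : (𝒞.label e₁, depth 𝒞 X e₁) ∈ labelDepths 𝒟 Y :=
    h𝒟.labelDepths_mono hY he₂'Y Set.sdiff_subset
      (hS₂ ▸ h𝒞.mk_mem_labelDepths hX he₂X Set.sdiff_subset ⟨he₁, hne⟩)
  rw [h𝒟.labelDepths_eq_insert hY he₁' he₁'Y, ← hS₁] at hp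
  rcases hp with hp | hp
  · rw [h𝒞.labelDepths_eq_insert hX he₁ he₁X, h𝒟.labelDepths_eq_insert hY he₁' he₁'Y, hp, hS₁]
  · exact absurd hp (hac𝒞.mk_notMem_labelDepths_diff h𝒞 hX he₁ he₁X)

theorem labelDepths_eq_of_tops (h𝒞 : IsStable 𝒞) (h𝒟 : IsStable 𝒟) (hX : X ∈ 𝒞.C)
    (hY : Y ∈ 𝒟.C) {e : E₁} {e' : E₂} (he : e ∈ X) (heX : X \ {e} ∈ 𝒞.C)
    (htop : ∀ d ∈ X, d ≠ e → lt 𝒞 X d e) (he' : e' ∈ Y) (he'Y : Y \ {e'} ∈ 𝒟.C)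
    (htop' : ∀ d ∈ Y, d ≠ e' → lt 𝒟 Y d e') (hlab : 𝒞.label e = 𝒟.label e')
    (hS : labelDepths 𝒞 (X \ {e}) = labelDepths 𝒟 (Y \ {e'})) :
    labelDepths 𝒞 X = labelDepths 𝒟 Y := by
  rw [h𝒞.labelDepths_eq_insert hX he heX, h𝒟.labelDepths_eq_insert hY he' he'Y, hlab,
    h𝒞.depth_eq_sSup_labelDepths_add_one hX he heX htop,
    h𝒟.depth_eq_sSup_labelDepths_add_one hY he' he'Y htop', hS]

theorem labelDepths_eq_of_removals_match (h𝒞 : IsStable 𝒞) (h𝒟 : IsStable 𝒟)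
    (hac𝒞 : NoEqAC 𝒞) (hac𝒟 : NoEqAC 𝒟) (hX : X ∈ 𝒞.C) (hY : Y ∈ 𝒟.C)
    (matchX : ∀ e ∈ X, X \ {e} ∈ 𝒞.C → ∃ e' ∈ Y, Y \ {e'} ∈ 𝒟.C ∧
      𝒞.label e = 𝒟.label e' ∧ labelDepths 𝒞 (X \ {e}) = labelDepths 𝒟 (Y \ {e'}))
    (matchY : ∀ e' ∈ Y, Y \ {e'} ∈ 𝒟.C → ∃ e ∈ X, X \ {e} ∈ 𝒞.C ∧
      𝒞.label e = 𝒟.label e' ∧ labelDepths 𝒞 (X \ {e}) = labelDepths 𝒟 (Y \ {e'})) :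
    labelDepths 𝒞 X = labelDepths 𝒟 Y := by
  rcases X.eq_empty_or_nonempty with rfl | hXne
  · obtain rfl : Y = ∅ := by
      by_contra hYne
      obtain ⟨e', he', he'Y⟩ := h𝒟.2.1 Y hY hYne
      obtain ⟨e, he, -⟩ := matchY e' he' he'Y
      exact he
    simp [labelDepths]
  obtain ⟨e, he, heX⟩ := h𝒞.2.1 X hX hXne.ne_empty
  obtain ⟨e', he', he'Y, hlab, hS⟩ := matchX e he heX
  by_cases twoX : ∃ d ∈ X, X \ {d} ∈ 𝒞.C ∧ d ≠ e
  · obtain ⟨d, hd, hdX, hde⟩ := twoX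
    obtain ⟨d', -, hd'Y, -, hS'⟩ := matchX d hd hdX
    exact labelDepths_eq_of_two_removals h𝒞 h𝒟 hac𝒞 hX hY he heX hdX (Ne.symm hde) he' he'Y
      hd'Y hS hS'
  by_cases twoY : ∃ d' ∈ Y, Y \ {d'} ∈ 𝒟.C ∧ d' ≠ e'
  · obtain ⟨d', hd', hd'Y, hde'⟩ := twoY
    obtain ⟨d, -, hdX, -, hS'⟩ := matchY d' hd' hd'Y
    exact (labelDepths_eq_of_two_removals h𝒟 h𝒞 hac𝒟 hY hX he' he'Y hd'Y (Ne.symm hde') he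
      heX hdX hS.symm hS'.symm).symm
  push Not at twoX twoY
  exact labelDepths_eq_of_tops h𝒞 h𝒟 hX hY he heX (fun _ => h𝒞.lt_of_unique_removable hX twoX)
    he' he'Y (fun _ => h𝒟.lt_of_unique_removable hY twoY) hlab hS

theorem IsRB.symm {R : Set E₁ → Set E₂ → Prop} (hR : IsRB 𝒞 𝒟 R) :
    IsRB 𝒟 𝒞 (fun Y X => R X Y) :=
  ⟨⟨⟨hR.1.1.1, fun _ _ hXY => (hR.1.1.2 _ _ hXY).symm⟩, fun _ _ hXY => (hR.1.2 _ _ hXY).symm⟩,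
    fun _ _ hXY => (hR.2 _ _ hXY).symm⟩

theorem IsRB.labelDepths_eq (h𝒞 : IsStable 𝒞) (h𝒟 : IsStable 𝒟) (hac𝒞 : NoEqAC 𝒞)
    (hac𝒟 : NoEqAC 𝒟) {R : Set E₁ → Set E₂ → Prop} (hR : IsRB 𝒞 𝒟 R) (hXY : R X Y) :
    labelDepths 𝒞 X = labelDepths 𝒟 Y := by
  have hX := (hR.1.1.2 X Y hXY).1
  refine induction_by_removal (P := fun X => ∀ Y, R X Y → labelDepths 𝒞 X = labelDepths 𝒟 Y)
    (fun X hX ih Y hXY => ?_) hX Y hXY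
  have hY := (hR.1.1.2 X Y hXY).2
  refine labelDepths_eq_of_removals_match h𝒞 h𝒟 hac𝒞 hac𝒟 hX hY (fun e he heX => ?_)
    (fun e' he' he'Y => ?_)
  · obtain ⟨Y', hYY', hR'⟩ := (hR.2 X Y hXY).1 _ _ (rTrans_iff.2 ⟨hX, e, he, rfl, heX, rfl⟩)
    obtain ⟨-, e', he', hlab, he'Y, rfl⟩ := rTrans_iff.1 hYY'
    exact ⟨e', he', he'Y, hlab.symm, ih e he heX _ hR'⟩
  · obtain ⟨X', hXX', hR'⟩ := (hR.2 X Y hXY).2 _ _ (rTrans_iff.2 ⟨hY, e', he', rfl, he'Y, rfl⟩)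
    obtain ⟨-, e, he, hlab, heX, rfl⟩ := rTrans_iff.1 hXX'
    exact ⟨e, he, heX, hlab, ih e he heX _ hR'⟩

theorem IsRB.exists_rel_of_subset (h𝒟 : IsStable 𝒟) {R : Set E₁ → Set E₂ → Prop}
    (hR : IsRB 𝒞 𝒟 R) {Z : Set E₂} (hZ : Z ∈ 𝒟.C) (hXY : R X Y) (hZY : Z ⊆ Y) :
    ∃ W ⊆ X, R W Z := by
  have hY := (hR.1.1.2 X Y hXY).2
  refine induction_by_removal (P := fun Y => ∀ X, R X Y → Z ⊆ Y → ∃ W ⊆ X, R W Z)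
    (fun Y hY ih X hXY hZY => ?_) hY X hXY hZY
  by_cases hYZ : Y ⊆ Z
  · exact ⟨X, subset_rfl, Set.Subset.antisymm hZY hYZ ▸ hXY⟩
  obtain ⟨d, hdY, hdZ⟩ := Set.not_subset.1 hYZ
  obtain ⟨v, hv, hvY, hdv⟩ := h𝒟.exists_removable_above hY hdY
  have hvZ : v ∉ Z := fun hvZ => hdZ (hdv Z hZ hZY hvZ)
  obtain ⟨X', hXX', hR'⟩ := (hR.2 X Y hXY).2 _ _ (rTrans_iff.2 ⟨hY, v, hv, rfl, hvY, rfl⟩)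
  obtain ⟨W, hWX', hWZ⟩ :=
    ih v hv hvY _ hR' fun z hz => ⟨hZY hz, fun hzv => hvZ (Set.mem_singleton_iff.1 hzv ▸ hz)⟩
  exact ⟨W, hWX'.trans hXX'.2.2.1, hWZ⟩

def depthIso (𝒞 : CS E₁ L) (𝒟 : CS E₂ L) (X : Set E₁) (Y : Set E₂) : Set (E₁ × E₂) :=
  {p | p.1 ∈ X ∧ p.2 ∈ Y ∧ 𝒞.label p.1 = 𝒟.label p.2 ∧ depth 𝒞 X p.1 = depth 𝒟 Y p.2}

theorem swap_mem_depthIso {d : E₁} {e : E₂} :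
    (e, d) ∈ depthIso 𝒟 𝒞 Y X ↔ (d, e) ∈ depthIso 𝒞 𝒟 X Y :=
  ⟨fun ⟨he, hd, hlab, hdep⟩ => ⟨hd, he, hlab.symm, hdep.symm⟩,
    fun ⟨hd, he, hlab, hdep⟩ => ⟨he, hd, hlab.symm, hdep.symm⟩⟩

theorem existsUnique_mem_depthIso (h𝒟 : IsStable 𝒟) (hac𝒟 : NoEqAC 𝒟) (hY : Y ∈ 𝒟.C)
    (hXY : labelDepths 𝒞 X = labelDepths 𝒟 Y) {d : E₁} (hd : d ∈ X) :
    ∃! e, (d, e) ∈ depthIso 𝒞 𝒟 X Y := by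
  obtain ⟨e, he, hp⟩ : (𝒞.label d, depth 𝒞 X d) ∈ labelDepths 𝒟 Y := hXY ▸ ⟨d, hd, rfl⟩
  rw [Prod.mk.injEq] at hp
  refine ⟨e, ⟨hd, he, hp.1.symm, hp.2.symm⟩, fun e₀ ⟨_, he₀, hlab, hdep⟩ => ?_⟩
  exact hac𝒟.eq_of_label_eq_of_depth_eq h𝒟 hY he₀ he (hlab.symm.trans hp.1.symm)
    (hdep.symm.trans hp.2.symm)

theorem mem_of_mem_of_labelDepths_eq (h𝒞 : IsStable 𝒞) (h𝒟 : IsStable 𝒟) (hac𝒟 : NoEqAC 𝒟)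
    (hX : X ∈ 𝒞.C) (hY : Y ∈ 𝒟.C) {W : Set E₁} {Z : Set E₂} (hW : W ∈ 𝒞.C) (hZ : Z ∈ 𝒟.C)
    (hWX : W ⊆ X) (hZY : Z ⊆ Y) (hWZ : labelDepths 𝒞 W = labelDepths 𝒟 Z) {d : E₁} {e : E₂}
    (hde : (d, e) ∈ depthIso 𝒞 𝒟 X Y) (hd : d ∈ W) : e ∈ Z := by
  obtain ⟨-, he, hlab, hdep⟩ : d ∈ X ∧ e ∈ Y ∧ 𝒞.label d = 𝒟.label e ∧
    depth 𝒞 X d = depth 𝒟 Y e := hde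
  obtain ⟨e₀, he₀, hp⟩ : (𝒞.label d, depth 𝒞 X d) ∈ labelDepths 𝒟 Z :=
    hWZ ▸ h𝒞.mk_mem_labelDepths hX hW hWX hd
  simp only [h𝒟.depth_eq_of_subset hY hZ hZY he₀, Prod.mk.injEq] at hp
  rwa [← hac𝒟.eq_of_label_eq_of_depth_eq h𝒟 hY (hZY he₀) he (hp.1.trans hlab)
    (hp.2.trans hdep)]

theorem mem_iff_mem_of_labelDepths_eq (h𝒞 : IsStable 𝒞) (h𝒟 : IsStable 𝒟) (hac𝒞 : NoEqAC 𝒞)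
    (hac𝒟 : NoEqAC 𝒟) (hX : X ∈ 𝒞.C) (hY : Y ∈ 𝒟.C) {W : Set E₁} {Z : Set E₂}
    (hW : W ∈ 𝒞.C) (hZ : Z ∈ 𝒟.C) (hWX : W ⊆ X) (hZY : Z ⊆ Y)
    (hWZ : labelDepths 𝒞 W = labelDepths 𝒟 Z) {d : E₁} {e : E₂}
    (hde : (d, e) ∈ depthIso 𝒞 𝒟 X Y) : d ∈ W ↔ e ∈ Z :=
  ⟨mem_of_mem_of_labelDepths_eq h𝒞 h𝒟 hac𝒟 hX hY hW hZ hWX hZY hWZ hde,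
    mem_of_mem_of_labelDepths_eq h𝒟 h𝒞 hac𝒞 hY hX hZ hW hZY hWX hWZ.symm
      (swap_mem_depthIso.2 hde)⟩

theorem sep_depthIso_of_subset (h𝒞 : IsStable 𝒞) (h𝒟 : IsStable 𝒟) (hac𝒞 : NoEqAC 𝒞)
    (hac𝒟 : NoEqAC 𝒟) (hX : X ∈ 𝒞.C) (hY : Y ∈ 𝒟.C) {W : Set E₁} {Z : Set E₂}
    (hW : W ∈ 𝒞.C) (hZ : Z ∈ 𝒟.C) (hWX : W ⊆ X) (hZY : Z ⊆ Y)
    (hWZ : labelDepths 𝒞 W = labelDepths 𝒟 Z) :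
    {p ∈ depthIso 𝒞 𝒟 X Y | p.1 ∈ W} = depthIso 𝒞 𝒟 W Z := by
  ext ⟨d, e⟩
  constructor
  · rintro ⟨hde, hd⟩
    have he := (mem_iff_mem_of_labelDepths_eq h𝒞 h𝒟 hac𝒞 hac𝒟 hX hY hW hZ hWX hZY hWZ hde).1 hd
    obtain ⟨-, -, hlab, hdep⟩ := hde
    refine ⟨hd, he, hlab, ?_⟩
    rwa [h𝒞.depth_eq_of_subset hX hW hWX hd, h𝒟.depth_eq_of_subset hY hZ hZY he]
  · rintro ⟨hd, he, hlab, hdep⟩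
    refine ⟨⟨hWX hd, hZY he, hlab, ?_⟩, hd⟩
    rwa [← h𝒞.depth_eq_of_subset hX hW hWX hd, ← h𝒟.depth_eq_of_subset hY hZ hZY he]

theorem IsRB.lt_of_lt (h𝒞 : IsStable 𝒞) (h𝒟 : IsStable 𝒟) (hac𝒞 : NoEqAC 𝒞)
    (hac𝒟 : NoEqAC 𝒟) {R : Set E₁ → Set E₂ → Prop} (hR : IsRB 𝒞 𝒟 R) (hXY : R X Y)
    {d₁ d₂ : E₁} {e₁ e₂ : E₂} (h₁ : (d₁, e₁) ∈ depthIso 𝒞 𝒟 X Y)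
    (h₂ : (d₂, e₂) ∈ depthIso 𝒞 𝒟 X Y) (hlt : lt 𝒞 X d₁ d₂) : lt 𝒟 Y e₁ e₂ := by
  obtain ⟨hX, hY⟩ := hR.1.1.2 X Y hXY
  refine ⟨fun Z hZ hZY he₂ => ?_, fun he => ?_⟩
  · obtain ⟨W, hWX, hWZ⟩ := hR.exists_rel_of_subset h𝒟 hZ hXY hZY
    have hW := (hR.1.1.2 W Z hWZ).1
    have hmem : ∀ {d e}, (d, e) ∈ depthIso 𝒞 𝒟 X Y → (d ∈ W ↔ e ∈ Z) :=
      mem_iff_mem_of_labelDepths_eq h𝒞 h𝒟 hac𝒞 hac𝒟 hX hY hW hZ hWX hZY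
        (hR.labelDepths_eq h𝒞 h𝒟 hac𝒞 hac𝒟 hWZ)
    exact (hmem h₁).1 (hlt.1 W hW hWX ((hmem h₂).2 he₂))
  · subst he
    exact (h𝒞.depth_lt_depth hX h₁.1 h₂.1 hlt).ne (h₁.2.2.2.trans h₂.2.2.2.symm)

theorem IsRB.isIso_depthIso (h𝒞 : IsStable 𝒞) (h𝒟 : IsStable 𝒟) (hac𝒞 : NoEqAC 𝒞)
    (hac𝒟 : NoEqAC 𝒟) {R : Set E₁ → Set E₂ → Prop} (hR : IsRB 𝒞 𝒟 R) (hXY : R X Y) :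
    IsIso 𝒞 𝒟 X Y (depthIso 𝒞 𝒟 X Y) := by
  obtain ⟨hX, hY⟩ := hR.1.1.2 X Y hXY
  have hS := hR.labelDepths_eq h𝒞 h𝒟 hac𝒞 hac𝒟 hXY
  refine ⟨fun p hp => ⟨hp.1, hp.2.1⟩, fun d hd => existsUnique_mem_depthIso h𝒟 hac𝒟 hY hS hd,
    fun e he => ?_, fun p hp => hp.2.2.1, fun p hp q hq =>
      ⟨hR.lt_of_lt h𝒞 h𝒟 hac𝒞 hac𝒟 hXY hp hq, hR.symm.lt_of_lt h𝒟 h𝒞 hac𝒟 hac𝒞 hXY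
        (swap_mem_depthIso.2 hp) (swap_mem_depthIso.2 hq)⟩⟩
  obtain ⟨d, hd, huniq⟩ := existsUnique_mem_depthIso h𝒞 hac𝒞 hX hS.symm he
  exact ⟨d, swap_mem_depthIso.1 hd, fun d' hd' => huniq d' (swap_mem_depthIso.2 hd')⟩

theorem IsRB.isHH (h𝒞 : IsStable 𝒞) (h𝒟 : IsStable 𝒟) (hac𝒞 : NoEqAC 𝒞) (hac𝒟 : NoEqAC 𝒟)
    {R : Set E₁ → Set E₂ → Prop} (hR : IsRB 𝒞 𝒟 R) :
    IsHH 𝒞 𝒟 {T | ∃ X Y, R X Y ∧ T = (X, Y, depthIso 𝒞 𝒟 X Y)} := by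
  have restrict : ∀ {X X' : Set E₁} {Y Y' : Set E₂}, R X Y → R X' Y' → X' ⊆ X → Y' ⊆ Y →
      {p ∈ depthIso 𝒞 𝒟 X Y | p.1 ∈ X'} = depthIso 𝒞 𝒟 X' Y' := fun hXY hXY' hX'X hY'Y =>
    sep_depthIso_of_subset h𝒞 h𝒟 hac𝒞 hac𝒟 (hR.1.1.2 _ _ hXY).1 (hR.1.1.2 _ _ hXY).2
      (hR.1.1.2 _ _ hXY').1 (hR.1.1.2 _ _ hXY').2 hX'X hY'Y
      (hR.labelDepths_eq h𝒞 h𝒟 hac𝒞 hac𝒟 hXY')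
  refine ⟨⟨∅, ∅, hR.1.1.1, by simp [depthIso]⟩, ?_⟩
  rintro X Y f ⟨X₀, Y₀, hXY, hT⟩
  simp only [Prod.mk.injEq] at hT
  obtain ⟨rfl, rfl, rfl⟩ := hT
  refine ⟨(hR.1.1.2 X Y hXY).1, (hR.1.1.2 X Y hXY).2,
    hR.isIso_depthIso h𝒞 h𝒟 hac𝒞 hac𝒟 hXY, fun a X' hXX' => ?_, fun a Y' hYY' => ?_,
    fun a X' hXX' => ?_⟩
  · obtain ⟨Y', hYY', hR'⟩ := (hR.1.2 X Y hXY).1 a X' hXX'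
    exact ⟨Y', _, hYY', ⟨X', Y', hR', rfl⟩, restrict hR' hXY hXX'.2.2.1 hYY'.2.2.1⟩
  · obtain ⟨X', hXX', hR'⟩ := (hR.1.2 X Y hXY).2 a Y' hYY'
    exact ⟨X', _, hXX', ⟨X', Y', hR', rfl⟩, restrict hR' hXY hXX'.2.2.1 hYY'.2.2.1⟩
  · obtain ⟨Y', hYY', hR'⟩ := (hR.2 X Y hXY).1 a X' hXX'
    exact ⟨Y', _, hYY', ⟨X', Y', hR', rfl⟩, restrict hXY hR' hXX'.2.2.1 hYY'.2.2.1⟩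

theorem IsIso.diff_singleton_mem (h𝒞 : IsStable 𝒞) (hX : X ∈ 𝒞.C) {f : Set (E₁ × E₂)}
    (hf : IsIso 𝒞 𝒟 X Y f) {d : E₁} {e : E₂} (hde : (d, e) ∈ f) (heY : Y \ {e} ∈ 𝒟.C) :
    X \ {d} ∈ 𝒞.C := by
  refine h𝒞.diff_singleton_mem hX fun c hc hdc => ?_
  obtain ⟨c', hcc', -⟩ := hf.2.1 c hc
  exact not_lt_of_diff_singleton_mem heY (hf.1 _ hcc').2 ((hf.2.2.2.2 _ hde _ hcc').1 hdc)

theorem IsHH.exists_rTrans_of_rTrans (h𝒞 : IsStable 𝒞)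
    {S : Set (Set E₁ × Set E₂ × Set (E₁ × E₂))} (hS : IsHH 𝒞 𝒟 S) {f : Set (E₁ × E₂)}
    (hf : (X, Y, f) ∈ S) {a : L} {Y' : Set E₂} (hYY' : RTrans 𝒟 a Y Y') :
    ∃ X', RTrans 𝒞 a X X' ∧ ∃ f', (X', Y', f') ∈ S := by
  obtain ⟨hX, -, hiso, -, -, hback⟩ := hS.2 X Y f hf
  obtain ⟨-, e, he, rfl, heY, rfl⟩ := rTrans_iff.1 hYY'
  obtain ⟨d, hde, huniq⟩ := hiso.2.2.1 e he
  have hdX := hiso.diff_singleton_mem h𝒞 hX hde heY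
  have hlab : 𝒞.label d = 𝒟.label e := hiso.2.2.2.1 _ hde
  have hXX' : RTrans 𝒞 (𝒟.label e) X (X \ {d}) :=
    rTrans_iff.2 ⟨hX, d, (hiso.1 _ hde).1, hlab, hdX, rfl⟩
  obtain ⟨Y'', f', hYY'', hf', hres⟩ := hback _ _ hXX'
  obtain ⟨-, v, -, -, -, rfl⟩ := rTrans_iff.1 hYY''
  obtain rfl : v = e := by
    by_contra hve
    obtain ⟨d', hd'e, -⟩ := (hS.2 _ _ _ hf').2.2.1.2.2.1 e ⟨he, Ne.symm hve⟩
    rw [← hres] at hd'e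
    exact hd'e.2.2 (huniq d' hd'e.1)
  exact ⟨X \ {d}, hXX', f', hf'⟩

theorem IsHH.isRB (h𝒞 : IsStable 𝒞) {S : Set (Set E₁ × Set E₂ × Set (E₁ × E₂))}
    (hS : IsHH 𝒞 𝒟 S) : IsRB 𝒞 𝒟 (fun X Y => ∃ f, (X, Y, f) ∈ S) := by
  refine ⟨⟨⟨⟨∅, hS.1⟩, fun X Y ⟨f, hf⟩ => ⟨(hS.2 X Y f hf).1, (hS.2 X Y f hf).2.1⟩⟩,
    fun X Y ⟨f, hf⟩ => ⟨fun a X' hXX' => ?_, fun a Y' hYY' => ?_⟩⟩,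
    fun X Y ⟨f, hf⟩ => ⟨fun a X' hXX' => ?_, fun a Y' hYY' => hS.exists_rTrans_of_rTrans h𝒞 hf hYY'⟩⟩
  · obtain ⟨Y', f', hYY', hf', -⟩ := (hS.2 X Y f hf).2.2.2.1 a X' hXX'
    exact ⟨Y', hYY', f', hf'⟩
  · obtain ⟨X', f', hXX', hf', -⟩ := (hS.2 X Y f hf).2.2.2.2.1 a Y' hYY'
    exact ⟨X', hXX', f', hf'⟩
  · obtain ⟨Y', f', hYY', hf', -⟩ := (hS.2 X Y f hf).2.2.2.2.2 a X' hXX'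
    exact ⟨Y', hYY', f', hf'⟩

end Bisimulation

end CS

open CS

/-- for stable configuration structures without equidepth
auto-concurrency, RB equivalence coincides with HH equivalence. -/
theorem stmt18 {E₁ E₂ : Type u} {L : Type v} (𝒞 : CS E₁ L) (𝒟 : CS E₂ L)
    (h𝒞 : IsStable 𝒞) (h𝒟 : IsStable 𝒟)
    (hac𝒞 : NoEqAC 𝒞) (hac𝒟 : NoEqAC 𝒟) :
    (∃ R : Set E₁ → Set E₂ → Prop, IsRB 𝒞 𝒟 R) ↔
    (∃ R : Set (Set E₁ × Set E₂ × Set (E₁ × E₂)), IsHH 𝒞 𝒟 R) := by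
  constructor
  · rintro ⟨R, hR⟩
    exact ⟨_, hR.isHH h𝒞 h𝒟 hac𝒞 hac𝒟⟩
  · rintro ⟨S, hS⟩
    exact ⟨_, hS.isRB h𝒞⟩
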